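/- arXiv:2105.04918 — 3 statements merged into one kernel-verified Lean document; each statement's English description precedes it below -/
import Mathlib

section
/- If f : V ⊆ ℝ^m → ℝ is (A_f, B_f, C)-mild up to order r and g : U ⊆ ℝ^m → V is (A_g, B_g, C)-mild up to order r (componentwise), then the composition f ∘ g is (Ã, B_f, C)-mild up to order r, where Ã = A_g·(m·B_g·A_f + 1)^{1+C}. -/
/-- Iterated directional (partial) derivative in coordinate `i`. -/
noncomputable def pd {m : ℕ} (i : Fin m) (f : (Fin m → ℝ) → ℝ) : (Fin m → ℝ) → ℝ :=
  fun x => deriv (fun t => f (Function.update x i t)) (x i)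

/-- The partial derivative of multi-order `ν`. -/
noncomputable def mDeriv {m : ℕ} (ν : Fin m → ℕ) (f : (Fin m → ℝ) → ℝ) :
    (Fin m → ℝ) → ℝ :=
  (List.finRange m).foldr (fun i g => (pd i)^[ν i] g) f

/-- `f` is `(A,B,C)`-mild up to order `r` on `U`. -/
def IsMildUpTo {m : ℕ} (U : Set (Fin m → ℝ)) (f : (Fin m → ℝ) → ℝ)
    (A B C : ℝ) (r : ℕ∞) : Prop :=
  ContDiffOn ℝ r f U ∧ ∀ ν : Fin m → ℕ, ((∑ i, ν i : ℕ) : ℕ∞) ≤ r → ∀ x ∈ U,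
    |mDeriv ν f x| ≤ B * A ^ (∑ i, ν i) * ((Nat.factorial (∑ i, ν i) : ℝ)) ^ (1 + C)

/-!
By Faà di Bruno's formula (`HasFTaylorSeriesUpToOn.comp`), the `n`-th derivative of `f ∘ g` at `x`
is a sum over the ordered partitions `c` of `Fin n` into blocks of sizes `n₁, …, n_ℓ` of
`D^ℓ f (g x)` applied to the vectors `D^{nᵢ} g x (…)`. Evaluated on basis vectors, each of these
vectors has coordinates bounded by `B_g A_g^{nᵢ} (nᵢ!)^{1+C}`; expanding them in the standard basis
costs a factor `m^ℓ`, so the term of `c` is at most `B_f A_g^n t^ℓ (ℓ! ∏ nᵢ!)^{1+C}` with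
`t = m B_g A_f`. As `ℓ! ∏ nᵢ! ≤ n!` and `∑_c t^ℓ ℓ! ∏ nᵢ! ≤ n! (1 + t)^n`, the sum is at most
`B_f A_g^n (n!)^{1+C} (1 + t)^n`, and `1 + t ≤ (1 + t)^{1+C}`.

Mildness bounds partial derivatives taken in a fixed order; since partial derivatives of a `C^k`
function commute, it is the same as a bound on the Taylor coefficients at tuples of basis vectors,
which is the form in which Faà di Bruno's formula can be used.
-/

open Finset Nat

theorem Nat.succ_mul_choose_add_mul_choose_succ_le (n j : ℕ) :
    (j + 1) * n.choose j + (n + (j + 1)) * n.choose (j + 1) ≤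
      (n + 1) * (n + 1).choose (j + 1) := by
  rw [Nat.choose_succ_succ]
  rcases le_or_gt j n with hj | hj
  · obtain ⟨d, rfl⟩ := Nat.exists_eq_add_of_le hj
    have := Nat.choose_succ_right_eq (j + d) j
    rw [Nat.add_sub_cancel_left] at this
    nlinarith
  · simp [Nat.choose_eq_zero_of_lt hj, Nat.choose_eq_zero_of_lt (hj.trans j.lt_succ_self)]

namespace OrderedFinpartition
variable {n : ℕ}

theorem sum_partSize (c : OrderedFinpartition n) : ∑ i, c.partSize i = n := by
  simpa using Fintype.card_congr c.equivSigma

def factorialWeight (c : OrderedFinpartition n) : ℕ := c.length ! * ∏ i, (c.partSize i)!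

theorem factorialWeight_pos (c : OrderedFinpartition n) : 0 < c.factorialWeight := by
  unfold factorialWeight; positivity

theorem factorialWeight_extendLeft (c : OrderedFinpartition n) :
    c.extendLeft.factorialWeight = (c.length + 1) * c.factorialWeight := by
  show (c.length + 1)! * ∏ i, ((Fin.cons 1 c.partSize : Fin (c.length + 1) → ℕ) i)! = _
  simp only [Fin.prod_univ_succ, Fin.cons_zero, Fin.cons_succ, factorialWeight, Nat.factorial_succ]
  ring

theorem factorialWeight_extendMiddle (c : OrderedFinpartition n) (k : Fin c.length) :
    (c.extendMiddle k).factorialWeight = (c.partSize k + 1) * c.factorialWeight := by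
  show c.length ! * ∏ i, (Function.update c.partSize k (c.partSize k + 1) i)! = _
  simp only [Function.apply_update (fun _ j => j !), prod_update_of_mem (mem_univ k),
    factorialWeight, prod_eq_mul_prod_sdiff_singleton_of_mem (mem_univ k), Nat.factorial_succ]
  ring

theorem sum_extendEquiv {M : Type*} [AddCommMonoid M] (F : OrderedFinpartition (n + 1) → M) :
    ∑ c, F c = ∑ c : OrderedFinpartition n, (F c.extendLeft + ∑ i, F (c.extendMiddle i)) := by
  rw [← (extendEquiv n).sum_comp, Fintype.sum_sigma]
  simp [Fintype.sum_option, extend]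

theorem sum_factorialWeight_extendMiddle (c : OrderedFinpartition n) :
    ∑ i, (c.extendMiddle i).factorialWeight = (n + c.length) * c.factorialWeight := by
  simp [factorialWeight_extendMiddle, ← Finset.sum_mul, Finset.sum_add_distrib, sum_partSize]

theorem factorialWeight_le_factorial (c : OrderedFinpartition n) : c.factorialWeight ≤ n ! := by
  induction n with
  | zero =>
    have : IsEmpty (Fin c.length) := by rw [Nat.le_zero.mp c.length_le]; infer_instance
    simp [factorialWeight, Nat.le_zero.mp c.length_le]
  | succ n ih =>
    obtain ⟨⟨c, _ | i⟩, rfl⟩ := (extendEquiv n).surjective c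
    · show c.extendLeft.factorialWeight ≤ _
      rw [factorialWeight_extendLeft, Nat.factorial_succ]
      exact Nat.mul_le_mul (by have := c.length_le; omega) (ih c)
    · show (c.extendMiddle i).factorialWeight ≤ _
      rw [factorialWeight_extendMiddle, Nat.factorial_succ]
      exact Nat.mul_le_mul (by have := c.partSize_le i; omega) (ih c)

theorem sum_factorialWeight_length_eq_succ (n j : ℕ) :
    ∑ c : OrderedFinpartition (n + 1) with c.length = j + 1, c.factorialWeight =
      (j + 1) * ∑ c : OrderedFinpartition n with c.length = j, c.factorialWeight +
      (n + (j + 1)) * ∑ c : OrderedFinpartition n with c.length = j + 1, c.factorialWeight := by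
  rw [sum_filter, sum_extendEquiv]
  simp only [extendLeft_length, extendMiddle_length, factorialWeight_extendLeft, sum_ite_irrel,
    sum_const_zero, sum_factorialWeight_extendMiddle, sum_add_distrib]
  rw [mul_sum, mul_sum, sum_filter, sum_filter]
  congr 1 <;> exact sum_congr rfl fun c _ => by split_ifs <;> simp_all

/- The exact value is `n ! * (n - 1).choose (k - 1)` (orderings of `Fin n` cut into `k` nonempty
segments); `n ! * n.choose k` is weaker, but it survives the recursion along `extendEquiv` and
its generating polynomial is `n ! * (1 + t) ^ n`. -/
theorem sum_factorialWeight_length_eq_le (n k : ℕ) :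
    ∑ c : OrderedFinpartition n with c.length = k, c.factorialWeight ≤ n ! * n.choose k := by
  induction n generalizing k with
  | zero =>
    rw [sum_filter, Fintype.sum_unique]
    rcases k with _ | k <;> simp [factorialWeight]
  | succ n ih =>
    rcases k with _ | j
    · rw [sum_eq_zero fun c hc => absurd (mem_filter.1 hc).2 (c.length_pos n.succ_pos).ne']
      exact Nat.zero_le _
    calc _ ≤ (j + 1) * (n ! * n.choose j) + (n + (j + 1)) * (n ! * n.choose (j + 1)) := by
          rw [sum_factorialWeight_length_eq_succ]; gcongr <;> apply ih
      _ = n ! * ((j + 1) * n.choose j + (n + (j + 1)) * n.choose (j + 1)) := by ring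
      _ ≤ n ! * ((n + 1) * (n + 1).choose (j + 1)) := by
          gcongr; exact Nat.succ_mul_choose_add_mul_choose_succ_le n j
      _ = _ := by rw [Nat.factorial_succ]; ring

theorem sum_pow_length_mul_factorialWeight_le (n : ℕ) {t : ℝ} (ht : 0 ≤ t) :
    ∑ c : OrderedFinpartition n, t ^ c.length * c.factorialWeight ≤ n ! * (1 + t) ^ n := by
  rw [← sum_fiberwise_of_maps_to (g := length) (t := range (n + 1))
    fun c _ => mem_range.2 (Nat.lt_succ_of_le c.length_le), add_comm 1 t, add_pow, mul_sum]
  refine sum_le_sum fun k _ => ?_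
  calc ∑ c : OrderedFinpartition n with c.length = k, t ^ c.length * (c.factorialWeight : ℝ)
      = t ^ k * ∑ c : OrderedFinpartition n with c.length = k, (c.factorialWeight : ℝ) := by
        rw [mul_sum]; exact sum_congr rfl fun c hc => by rw [(mem_filter.1 hc).2]
    _ ≤ t ^ k * (n ! * n.choose k) := by
        gcongr; exact_mod_cast sum_factorialWeight_length_eq_le n k
    _ = n ! * (t ^ k * 1 ^ (n - k) * n.choose k) := by ring

end OrderedFinpartition

section PartialDerivatives

variable {m : ℕ} {U : Set (Fin m → ℝ)}

theorem pd_eq_fderiv {F : (Fin m → ℝ) → ℝ} {x : Fin m → ℝ} (i : Fin m)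
    (hF : DifferentiableAt ℝ F x) : pd i F x = fderiv ℝ F x (Pi.single i 1) := by
  have h : HasFDerivAt F (fderiv ℝ F x) (Function.update x i (x i)) := by
    rw [Function.update_eq_self]; exact hF.hasFDerivAt
  exact (h.comp_hasDerivAt (x i) (hasDerivAt_update x i (x i))).deriv

theorem Set.EqOn.pd {F G : (Fin m → ℝ) → ℝ} (h : Set.EqOn F G U) (hU : IsOpen U) (i : Fin m) :
    Set.EqOn (pd i F) (pd i G) U := fun x hx => by
  have hpre : Function.update x i ⁻¹' U ∈ nhds (x i) :=
    (hasDerivAt_update x i (x i)).continuousAt.preimage_mem_nhds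
      (by rw [Function.update_eq_self]; exact hU.mem_nhds hx)
  exact Filter.EventuallyEq.deriv_eq (Filter.mem_of_superset hpre fun t ht => h ht)

theorem ContDiffOn.pd {k : ℕ} {F : (Fin m → ℝ) → ℝ} (hF : ContDiffOn ℝ (k + 1) F U)
    (hU : IsOpen U) (i : Fin m) : ContDiffOn ℝ k (pd i F) U := by
  have hdiff : DifferentiableOn ℝ F U := hF.differentiableOn (by simp)
  refine ContDiffOn.congr ?_ fun y hy => pd_eq_fderiv i (hdiff.differentiableAt (hU.mem_nhds hy))
  exact (ContinuousLinearMap.apply ℝ ℝ (Pi.single i 1)).contDiff.comp_contDiffOn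
    (hF.fderiv_of_isOpen hU le_rfl)

theorem pd_pd_comm {F : (Fin m → ℝ) → ℝ} (hF : ContDiffOn ℝ 2 F U) (hU : IsOpen U) (i j : Fin m) :
    Set.EqOn (pd i (pd j F)) (pd j (pd i F)) U := by
  have hdiff : ∀ y ∈ U, DifferentiableAt ℝ F y := fun y hy =>
    (hF.differentiableOn (by simp)).differentiableAt (hU.mem_nhds hy)
  have hsecond : ∀ u v, ∀ x ∈ U,
      pd u (pd v F) x = fderiv ℝ (fderiv ℝ F) x (Pi.single u 1) (Pi.single v 1) := by
    intro u v x hx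
    have hF' : DifferentiableAt ℝ (fderiv ℝ F) x :=
      ((hF.contDiffAt (hU.mem_nhds hx)).fderiv_right (m := 1) le_rfl).differentiableAt
        one_ne_zero
    have hd : HasFDerivAt (fun y => fderiv ℝ F y (Pi.single v 1))
        ((ContinuousLinearMap.apply ℝ ℝ (Pi.single v 1)).comp (fderiv ℝ (fderiv ℝ F) x)) x :=
      (ContinuousLinearMap.apply ℝ ℝ (Pi.single v (1 : ℝ) : Fin m → ℝ)).hasFDerivAt.comp x
        hF'.hasFDerivAt
    rw [(Set.EqOn.pd (fun y hy => pd_eq_fderiv v (hdiff y hy)) hU u) hx,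
      pd_eq_fderiv u hd.differentiableAt, hd.fderiv]
    rfl
  intro x hx
  rw [hsecond i j x hx, hsecond j i x hx]
  exact ((hF.contDiffAt (hU.mem_nhds hx)).isSymmSndFDerivAt (by simp)).eq _ _

noncomputable def pdList (l : List (Fin m)) (F : (Fin m → ℝ) → ℝ) : (Fin m → ℝ) → ℝ :=
  l.foldr pd F

theorem pdList_nil (F : (Fin m → ℝ) → ℝ) : pdList [] F = F := rfl

theorem pdList_cons (i : Fin m) (l : List (Fin m)) (F : (Fin m → ℝ) → ℝ) :
    pdList (i :: l) F = pd i (pdList l F) := rfl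

theorem pdList_append (l₁ l₂ : List (Fin m)) (F : (Fin m → ℝ) → ℝ) :
    pdList (l₁ ++ l₂) F = pdList l₁ (pdList l₂ F) :=
  List.foldr_append

theorem iterate_pd (i : Fin m) (k : ℕ) (F : (Fin m → ℝ) → ℝ) :
    (pd i)^[k] F = pdList (List.replicate k i) F := by
  induction k with
  | zero => rfl
  | succ k ih => rw [Function.iterate_succ_apply', ih]; rfl

theorem ContDiffOn.pdList {k : ℕ} {F : (Fin m → ℝ) → ℝ} (l : List (Fin m))
    (hF : ContDiffOn ℝ (k + l.length : ℕ) F U) (hU : IsOpen U) :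
    ContDiffOn ℝ k (pdList l F) U := by
  induction l generalizing k with
  | nil => exact hF
  | cons i l ih =>
    refine ContDiffOn.pd ?_ hU i
    exact_mod_cast ih (k := k + 1) (by simpa [Nat.add_assoc, Nat.add_comm 1] using hF)

theorem pdList_perm {N : WithTop ℕ∞} {F : (Fin m → ℝ) → ℝ} (hF : ContDiffOn ℝ N F U)
    (hU : IsOpen U) {l₁ l₂ : List (Fin m)} (hl : l₁.Perm l₂)
    (hN : (l₁.length : WithTop ℕ∞) ≤ N) : Set.EqOn (pdList l₁ F) (pdList l₂ F) U := by
  induction hl with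
  | nil => exact Set.eqOn_refl _ _
  | cons i _ ih =>
    exact (ih (le_trans (by exact_mod_cast Nat.le_succ _) hN)).pd hU i
  | swap i j l =>
    have h2 : ContDiffOn ℝ 2 (pdList l F) U :=
      (hF.of_le (le_trans (by simp; norm_cast; omega) hN)).pdList l hU
    exact pd_pd_comm h2 hU j i
  | trans h₁₂ _ ih₁₂ ih₂₃ => exact (ih₁₂ hN).trans (ih₂₃ (h₁₂.length_eq ▸ hN))

def indexList (ν : Fin m → ℕ) : List (Fin m) :=
  (List.finRange m).flatMap fun i => List.replicate (ν i) i

theorem mDeriv_eq_pdList (ν : Fin m → ℕ) (F : (Fin m → ℝ) → ℝ) :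
    mDeriv ν F = pdList (indexList ν) F := by
  suffices ∀ l : List (Fin m), l.foldr (fun i G => (pd i)^[ν i] G) F =
      pdList (l.flatMap fun i => List.replicate (ν i) i) F from this _
  intro l
  induction l with
  | nil => rfl
  | cons i l ih => rw [List.foldr_cons, List.flatMap_cons, pdList_append, ih, iterate_pd]

theorem length_indexList (ν : Fin m → ℕ) : (indexList ν).length = ∑ i, ν i := by
  simp [indexList, List.length_flatMap, Fin.sum_univ_def]

theorem count_indexList (ν : Fin m → ℕ) (j : Fin m) : (indexList ν).count j = ν j := by
  simp [indexList, List.count_flatMap, List.count_replicate, ← Fin.sum_univ_def]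

theorem indexList_count_perm (l : List (Fin m)) : (indexList (l.count ·)).Perm l :=
  List.perm_iff_count.2 fun j => count_indexList _ j

theorem pdList_ofFn_eq_taylor {N : WithTop ℕ∞} {F : (Fin m → ℝ) → ℝ}
    {p : (Fin m → ℝ) → FormalMultilinearSeries ℝ (Fin m → ℝ) ℝ}
    (hp : HasFTaylorSeriesUpToOn N F p U) (hU : IsOpen U) {k : ℕ} (hk : (k : WithTop ℕ∞) ≤ N)
    (a : Fin k → Fin m) {x : Fin m → ℝ} (hx : x ∈ U) :
    pdList (List.ofFn a) F x = p x k (fun j => Pi.single (a j) 1) := by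
  induction k generalizing x with
  | zero =>
    rw [List.ofFn_zero, pdList_nil, ← hp.zero_eq x hx, ContinuousMultilinearMap.curry0_apply]
    congr 1
    exact Subsingleton.elim _ _
  | succ k ih =>
    have hkN : (k : WithTop ℕ∞) < N := lt_of_lt_of_le (by exact_mod_cast k.lt_succ_self) hk
    set v : Fin k → Fin m → ℝ := fun j => Pi.single (a j.succ) 1
    have hd : HasFDerivAt (fun y => p y k v) ((p x (k + 1)).curryLeft.flipMultilinear v) x :=
      ((hp.fderivWithin k hkN x hx).hasFDerivAt (hU.mem_nhds hx)).continuousMultilinear_apply_const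
        v
    rw [List.ofFn_succ, pdList_cons,
      Set.EqOn.pd (fun y hy => ih hkN.le (fun j => a j.succ) hy) hU (a 0) hx,
      pd_eq_fderiv (a 0) hd.differentiableAt, hd.fderiv]
    show p x (k + 1) (Fin.cons _ v) = _
    congr 1
    ext j : 1
    exact Fin.cases rfl (fun _ => rfl) j

theorem isMildUpTo_iff_taylor {r : ℕ∞} {F : (Fin m → ℝ) → ℝ}
    {p : (Fin m → ℝ) → FormalMultilinearSeries ℝ (Fin m → ℝ) ℝ} {A B C : ℝ}
    (hp : HasFTaylorSeriesUpToOn r F p U) (hU : IsOpen U) :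
    IsMildUpTo U F A B C r ↔ ∀ k : ℕ, (k : ℕ∞) ≤ r → ∀ a : Fin k → Fin m, ∀ x ∈ U,
      |p x k (fun j => Pi.single (a j) 1)| ≤ B * A ^ k * (k.factorial : ℝ) ^ (1 + C) := by
  constructor
  · intro hF k hk a x hx
    have hperm := indexList_count_perm (List.ofFn a)
    have hsum : ∑ i, (List.ofFn a).count i = k := by
      rw [← length_indexList, hperm.length_eq, List.length_ofFn]
    have hbound := hF.2 _ (hsum ▸ hk) x hx
    rwa [hsum, mDeriv_eq_pdList, pdList_perm hF.1 hU hperm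
      (by rw [hperm.length_eq, List.length_ofFn]; exact_mod_cast hk) hx,
      pdList_ofFn_eq_taylor hp hU (by exact_mod_cast hk) a hx] at hbound
  · refine fun h => ⟨hp.contDiffOn, fun ν hν x hx => ?_⟩
    rw [← length_indexList] at hν ⊢
    have htaylor := pdList_ofFn_eq_taylor hp hU (by exact_mod_cast hν) (indexList ν).get hx
    rw [List.ofFn_get] at htaylor
    rw [mDeriv_eq_pdList, htaylor]
    exact h _ hν _ x hx

end PartialDerivatives

section FaaDiBruno

variable {m : ℕ}

theorem ContinuousMultilinearMap.abs_apply_le_of_forall_single {k : ℕ}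
    (f : ContinuousMultilinearMap ℝ (fun _ : Fin k => Fin m → ℝ) ℝ) {M : ℝ}
    (hf : ∀ J : Fin k → Fin m, |f (fun i => Pi.single (J i) 1)| ≤ M) (w : Fin k → Fin m → ℝ) :
    |f w| ≤ m ^ k * M * ∏ i, ‖w i‖ := by
  have hexpand : f w = ∑ J : Fin k → Fin m, (∏ i, w i (J i)) • f (fun i => Pi.single (J i) 1) := by
    conv_lhs => rw [show w = fun i => ∑ j, w i j • Pi.single j 1 from
      funext fun i => pi_eq_sum_univ' (w i)]
    rw [f.map_sum]
    exact sum_congr rfl fun J _ => f.map_smul_univ _ _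
  have hterm : ∀ J : Fin k → Fin m,
      |(∏ i, w i (J i)) • f (fun i => Pi.single (J i) 1)| ≤ M * ∏ i, ‖w i‖ := by
    intro J
    rw [smul_eq_mul, abs_mul, abs_prod, mul_comm]
    exact mul_le_mul (hf J)
      (prod_le_prod (fun i _ => abs_nonneg _) fun i _ => norm_le_pi_norm (w i) (J i))
      (prod_nonneg fun i _ => abs_nonneg _) ((abs_nonneg _).trans (hf J))
  calc |f w| ≤ ∑ J : Fin k → Fin m, M * ∏ i, ‖w i‖ := by
        rw [hexpand]; exact (abs_sum_le_sum_abs _ _).trans (sum_le_sum fun J _ => hterm J)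
    _ = m ^ k * M * ∏ i, ‖w i‖ := by simp [mul_assoc]

theorem OrderedFinpartition.abs_compAlongOrderedFinpartition_le
    {E : Type*} [NormedAddCommGroup E] [NormedSpace ℝ E] {n : ℕ} (c : OrderedFinpartition n)
    {q : FormalMultilinearSeries ℝ (Fin m → ℝ) ℝ} {p : FormalMultilinearSeries ℝ E (Fin m → ℝ)}
    {Af Bf Ag Bg C : ℝ} (hAf : 0 ≤ Af) (hBf : 0 ≤ Bf)
    (hq : ∀ J : Fin c.length → Fin m, |q c.length (fun i => Pi.single (J i) 1)| ≤
      Bf * Af ^ c.length * (c.length ! : ℝ) ^ (1 + C))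
    (v : Fin n → E)
    (hp : ∀ i, ‖p (c.partSize i) (v ∘ c.emb i)‖ ≤
      Bg * Ag ^ c.partSize i * ((c.partSize i)! : ℝ) ^ (1 + C)) :
    |q.compAlongOrderedFinpartition p c v| ≤
      Bf * Ag ^ n * (m * Bg * Af) ^ c.length * (c.factorialWeight : ℝ) ^ (1 + C) := by
  calc |q.compAlongOrderedFinpartition p c v|
      ≤ m ^ c.length * (Bf * Af ^ c.length * (c.length ! : ℝ) ^ (1 + C)) *
          ∏ i, ‖p (c.partSize i) (v ∘ c.emb i)‖ :=
        (q c.length).abs_apply_le_of_forall_single hq _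
    _ ≤ m ^ c.length * (Bf * Af ^ c.length * (c.length ! : ℝ) ^ (1 + C)) *
          ∏ i, (Bg * Ag ^ c.partSize i * ((c.partSize i)! : ℝ) ^ (1 + C)) := by
        gcongr with i; exact hp i
    _ = _ := by
        rw [prod_mul_distrib, prod_mul_distrib, prod_const, prod_pow_eq_pow_sum, sum_partSize,
          Real.finsetProd_rpow _ _ (fun i _ => by positivity), factorialWeight, Nat.cast_mul,
          Nat.cast_prod, Real.mul_rpow (by positivity) (by positivity), Finset.card_univ,
          Fintype.card_fin]
        ring

theorem FormalMultilinearSeries.abs_taylorComp_le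
    {E : Type*} [NormedAddCommGroup E] [NormedSpace ℝ E] {n : ℕ}
    {q : FormalMultilinearSeries ℝ (Fin m → ℝ) ℝ} {p : FormalMultilinearSeries ℝ E (Fin m → ℝ)}
    {Af Bf Ag Bg C : ℝ} (hAf : 0 ≤ Af) (hBf : 0 ≤ Bf) (hAg : 0 ≤ Ag) (hBg : 0 ≤ Bg) (hC : 0 ≤ C)
    (hq : ∀ k ≤ n, ∀ J : Fin k → Fin m,
      |q k (fun i => Pi.single (J i) 1)| ≤ Bf * Af ^ k * (k ! : ℝ) ^ (1 + C))
    (v : Fin n → E)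
    (hp : ∀ k ≤ n, ∀ b : Fin k → Fin n, ‖p k (v ∘ b)‖ ≤ Bg * Ag ^ k * (k ! : ℝ) ^ (1 + C)) :
    |q.taylorComp p n v| ≤ Bf * (Ag * (m * Bg * Af + 1) ^ (1 + C)) ^ n * (n ! : ℝ) ^ (1 + C) := by
  set t : ℝ := m * Bg * Af
  have ht : 0 ≤ t := by positivity
  have hpart (c : OrderedFinpartition n) : |q.compAlongOrderedFinpartition p c v| ≤
      Bf * Ag ^ n * (n ! : ℝ) ^ C * (t ^ c.length * c.factorialWeight) := by
    have hW : (c.factorialWeight : ℝ) ^ (1 + C) ≤ c.factorialWeight * (n ! : ℝ) ^ C := by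
      rw [Real.rpow_add (by exact_mod_cast c.factorialWeight_pos), Real.rpow_one]
      gcongr
      exact_mod_cast c.factorialWeight_le_factorial
    calc _ ≤ Bf * Ag ^ n * t ^ c.length * (c.factorialWeight : ℝ) ^ (1 + C) :=
          c.abs_compAlongOrderedFinpartition_le hAf hBf (hq _ c.length_le) v
            fun i => hp _ (c.partSize_le i) _
      _ ≤ Bf * Ag ^ n * t ^ c.length * (c.factorialWeight * (n ! : ℝ) ^ C) := by gcongr
      _ = _ := by ring
  have hgrowth : 1 + t ≤ (t + 1) ^ (1 + C) := by
    rw [add_comm 1 t]; exact Real.self_le_rpow_of_one_le (by linarith) (by linarith)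
  calc |q.taylorComp p n v|
      ≤ ∑ c : OrderedFinpartition n,
          Bf * Ag ^ n * (n ! : ℝ) ^ C * (t ^ c.length * c.factorialWeight) := by
        rw [FormalMultilinearSeries.taylorComp, _root_.sum_apply]
        exact (abs_sum_le_sum_abs _ _).trans (sum_le_sum fun c _ => hpart c)
    _ ≤ Bf * Ag ^ n * (n ! : ℝ) ^ C * (n ! * (1 + t) ^ n) := by
        rw [← mul_sum]
        gcongr
        exact OrderedFinpartition.sum_pow_length_mul_factorialWeight_le n ht
    _ ≤ Bf * Ag ^ n * (n ! : ℝ) ^ C * (n ! * ((t + 1) ^ (1 + C)) ^ n) := by gcongr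
    _ = _ := by rw [mul_pow, Real.rpow_add (by positivity : (0 : ℝ) < n !), Real.rpow_one]; ring

end FaaDiBruno

theorem mild_comp {m : ℕ} {U V : Set (Fin m → ℝ)} (hU : IsOpen U) (hV : IsOpen V)
    {f : (Fin m → ℝ) → ℝ} {g : (Fin m → ℝ) → (Fin m → ℝ)}
    {Af Bf Ag Bg C : ℝ} {r : ℕ∞}
    (hAf : 0 < Af) (hBf : 0 < Bf) (hAg : 0 < Ag) (hBg : 0 < Bg) (hC : 0 ≤ C)
    (hgU : Set.MapsTo g U V)
    (hf : IsMildUpTo V f Af Bf C r)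
    (hg : ∀ i : Fin m, IsMildUpTo U (fun x => g x i) Ag Bg C r) :
    IsMildUpTo U (f ∘ g) (Ag * (m * Bg * Af + 1) ^ (1 + C)) Bf C r := by
  have hgC : ContDiffOn ℝ r g U := contDiffOn_pi.2 fun i => (hg i).1
  have hTf := hf.1.ftaylorSeriesWithin hV.uniqueDiffOn
  have hTg := hgC.ftaylorSeriesWithin hU.uniqueDiffOn
  rw [isMildUpTo_iff_taylor (hTf.comp hTg hgU) hU]
  intro n hn a x hx
  refine FormalMultilinearSeries.abs_taylorComp_le hAf.le hBf.le hAg.le hBg.le hC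
    (fun k hk J => (isMildUpTo_iff_taylor hTf hV).1 hf k ?_ J (g x) (hgU hx)) _
    fun k hk b => (pi_norm_le_iff_of_nonneg (by positivity)).2 fun j => ?_
  · exact le_trans (by exact_mod_cast hk) hn
  · have hTgj : HasFTaylorSeriesUpToOn r (fun x => g x j) _ U :=
      hTg.continuousLinearMap_comp (ContinuousLinearMap.proj j : (Fin m → ℝ) →L[ℝ] ℝ)
    exact (isMildUpTo_iff_taylor hTgj hU).1 (hg j) k (le_trans (by exact_mod_cast hk) hn) (a ∘ b)
      x hx
end

section
/- Let b : (0,1)^m → ℝ be a bounded monomial function b(x) = a·x^μ with bounded range and with C¹-norm bounded by B₁ (i.e., |b| and all first-order partials of b are bounded by B₁ on (0,1)^m and |μ_i| bounded). Let r ∈ ℕ and P_r(x) = (x₁^r,…,x_m^r). Then there exist A, B > 0 depending only on μ, a, B₁, m such that b ∘ P_r is (A·r, B, 0)-mild up to order r: for all ν ∈ ℕ^m with |ν| ≤ r and x ∈ (0,1)^m, |(b∘P_r)^{(ν)}(x)| ≤ B·(Ar)^{|ν|}·|ν|!. -/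
/-!
On the open unit cube `b` is the monomial `a x^μ`. If `a ≠ 0`, the partial derivative
`∂ᵢb = a μᵢ x^(μ - eᵢ)` blows up as `xᵢ → 0⁺` unless `μᵢ = 0` or `μᵢ ≥ 1`. Substituting `x ↦ x^r`
turns the exponents into `rμᵢ`, and `∂^ν (a x^(rμ)) = a ∏ᵢ (rμᵢ)(rμᵢ - 1)⋯(rμᵢ - νᵢ + 1) x^(rμ - ν)`.
A coordinate with `μᵢ = 0` contributes only when `νᵢ = 0`; one with `μᵢ ≥ 1` has `νᵢ ≤ r ≤ rμᵢ`, so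
every factor of the falling factorial lies in `[0, rμᵢ]` and the power of `xᵢ` is at most `1`.
This gives the bound `|a| (A r)^|ν|` for any `A ≥ maxᵢ μᵢ`.
-/

open Finset Filter Topology

section PartialDerivatives

variable {m : ℕ} {U : Set (Fin m → ℝ)} {f g : (Fin m → ℝ) → ℝ}

theorem pd_congr (hU : IsOpen U) (h : Set.EqOn f g U) (i : Fin m) :
    Set.EqOn (pd i f) (pd i g) U := by
  intro x hx
  have hline : Continuous fun t : ℝ => Function.update x i t := by fun_prop
  apply Filter.EventuallyEq.deriv_eq
  filter_upwards [(hU.preimage hline).mem_nhds (by simpa using hx)] with t ht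
  exact h ht

theorem iterate_pd_congr (hU : IsOpen U) (h : Set.EqOn f g U) (i : Fin m) (k : ℕ) :
    Set.EqOn ((pd i)^[k] f) ((pd i)^[k] g) U := by
  induction k with
  | zero => exact h
  | succ k ih =>
    simp only [Function.iterate_succ_apply']
    exact pd_congr hU ih i

theorem mDeriv_congr (hU : IsOpen U) (h : Set.EqOn f g U) (ν : Fin m → ℕ) :
    Set.EqOn (mDeriv ν f) (mDeriv ν g) U := by
  unfold mDeriv
  induction List.finRange m with
  | nil => exact h
  | cons i L ih => exact iterate_pd_congr hU ih i (ν i)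

theorem mDeriv_zero (f : (Fin m → ℝ) → ℝ) : mDeriv 0 f = f := by
  simp [mDeriv]

theorem mDeriv_ite_eq (i : Fin m) (f : (Fin m → ℝ) → ℝ) :
    mDeriv (fun j => if j = i then 1 else 0) f = pd i f := by
  have key : ∀ L : List (Fin m), L.Nodup →
      L.foldr (fun j g => (pd j)^[if j = i then 1 else 0] g) f = if i ∈ L then pd i f else f := by
    intro L hL
    induction L with
    | nil => simp
    | cons j L ih =>
      rw [List.foldr_cons, ih (List.nodup_cons.mp hL).2]
      by_cases hji : j = i
      · subst hji
        simp [(List.nodup_cons.mp hL).1]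
      · simp [hji, Ne.symm hji]
  exact (key _ (List.nodup_finRange m)).trans (if_pos (List.mem_finRange i))

end PartialDerivatives

section Monomials

variable {m : ℕ}

noncomputable def rpowMonomial (c : ℝ) (s : Fin m → ℝ) (x : Fin m → ℝ) : ℝ :=
  c * ∏ j, x j ^ s j

theorem isOpen_positiveOrthant : IsOpen (Set.univ.pi fun _ : Fin m => Set.Ioi (0 : ℝ)) :=
  isOpen_set_pi Set.finite_univ fun _ _ => isOpen_Ioi

theorem prod_update_rpow (x s : Fin m → ℝ) (i : Fin m) (t : ℝ) :
    ∏ j, Function.update x i t j ^ s j = t ^ s i * ∏ j ∈ univ.erase i, x j ^ s j := by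
  rw [← mul_prod_erase univ _ (mem_univ i), Function.update_self]
  congr 1
  exact prod_congr rfl fun j hj => by rw [Function.update_of_ne (ne_of_mem_erase hj)]

theorem pd_rpowMonomial (c : ℝ) (s : Fin m → ℝ) (i : Fin m) {x : Fin m → ℝ} (hx : 0 < x i) :
    pd i (rpowMonomial c s) x = rpowMonomial (c * s i) (Function.update s i (s i - 1)) x := by
  set K := ∏ j ∈ univ.erase i, x j ^ s j
  have hline : (fun t => rpowMonomial c s (Function.update x i t)) = fun t => c * K * t ^ s i := by
    funext t
    rw [rpowMonomial, prod_update_rpow]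
    ring
  have hK : ∏ j ∈ univ.erase i, x j ^ Function.update s i (s i - 1) j = K :=
    prod_congr rfl fun j hj => by rw [Function.update_of_ne (ne_of_mem_erase hj)]
  rw [pd, hline, ((Real.hasDerivAt_rpow_const (Or.inl hx.ne')).const_mul (c * K)).deriv,
    rpowMonomial, ← mul_prod_erase univ _ (mem_univ i), Function.update_self, hK]
  ring

theorem iterate_pd_rpowMonomial (c : ℝ) (s : Fin m → ℝ) (i : Fin m) (k : ℕ) :
    Set.EqOn ((pd i)^[k] (rpowMonomial c s))
      (rpowMonomial (c * (descPochhammer ℝ k).eval (s i)) (Function.update s i (s i - k)))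
      (Set.univ.pi fun _ => Set.Ioi 0) := by
  induction k with
  | zero => intro x _; simp
  | succ k ih =>
    intro x hx
    rw [Function.iterate_succ_apply', pd_congr isOpen_positiveOrthant ih i hx,
      pd_rpowMonomial _ _ _ (Set.mem_univ_pi.mp hx i), Function.update_self,
      Function.update_idem, descPochhammer_succ_eval, mul_assoc, Nat.cast_succ, sub_add_eq_sub_sub]

theorem foldr_iterate_pd_rpowMonomial (ν : Fin m → ℕ) (c : ℝ) (s : Fin m → ℝ)
    {L : List (Fin m)} (hL : L.Nodup) :
    Set.EqOn (L.foldr (fun i g => (pd i)^[ν i] g) (rpowMonomial c s))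
      (rpowMonomial (c * (L.map fun i => (descPochhammer ℝ (ν i)).eval (s i)).prod)
        (fun j => if j ∈ L then s j - ν j else s j))
      (Set.univ.pi fun _ => Set.Ioi 0) := by
  induction L with
  | nil => intro x _; simp
  | cons i L ih =>
    obtain ⟨hiL, hL⟩ := List.nodup_cons.mp hL
    intro x hx
    rw [List.foldr_cons, iterate_pd_congr isOpen_positiveOrthant (ih hL) i (ν i) hx,
      iterate_pd_rpowMonomial _ _ _ _ hx]
    simp only [hiL, if_false, List.map_cons, List.prod_cons]
    congr 1
    · ring
    · funext j
      by_cases hj : j = i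
      · subst hj; simp
      · simp [hj]

theorem mDeriv_rpowMonomial (ν : Fin m → ℕ) (c : ℝ) (s : Fin m → ℝ) :
    Set.EqOn (mDeriv ν (rpowMonomial c s))
      (rpowMonomial (c * ∏ i, (descPochhammer ℝ (ν i)).eval (s i)) fun i => s i - ν i)
      (Set.univ.pi fun _ => Set.Ioi 0) := by
  intro x hx
  rw [mDeriv, foldr_iterate_pd_rpowMonomial ν c s (List.nodup_finRange m) hx, Fin.prod_univ_def]
  simp only [List.mem_finRange, if_true]

theorem eq_zero_or_one_le_of_bounded_pd {a B : ℝ} (ha : a ≠ 0) {μ : Fin m → ℝ} (i : Fin m)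
    (hbound : ∀ x ∈ Set.univ.pi fun _ => Set.Ioo (0 : ℝ) 1, |pd i (rpowMonomial a μ) x| ≤ B) :
    μ i = 0 ∨ 1 ≤ μ i := by
  by_contra! h
  obtain ⟨hμ0, hμ1⟩ := h
  obtain ⟨K, hK, hKdef⟩ : ∃ K : ℝ, 0 < K ∧
      ∏ j ∈ univ.erase i, (1 / 2 : ℝ) ^ Function.update μ i (μ i - 1) j = K :=
    ⟨_, prod_pos fun j _ => by positivity, rfl⟩
  have hline : ∀ t ∈ Set.Ioo (0 : ℝ) 1, |a * μ i| * K * t ^ (μ i - 1) ≤ B := by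
    intro t ht
    have hx : Function.update (fun _ => (1 / 2 : ℝ)) i t ∈ Set.univ.pi fun _ => Set.Ioo 0 1 := by
      refine Set.mem_univ_pi.2 fun j => ?_
      rcases eq_or_ne j i with rfl | hj
      · simpa using ht
      · simp only [Function.update_of_ne hj]
        norm_num
    have hpd := hbound _ hx
    rwa [pd_rpowMonomial _ _ _ (by simpa using ht.1), rpowMonomial, prod_update_rpow,
      Function.update_self, hKdef, abs_mul, abs_mul (t ^ _),
      abs_of_pos (Real.rpow_pos_of_pos ht.1 _), abs_of_pos hK, mul_comm (t ^ _), ← mul_assoc] at hpd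
  have hblow : Tendsto (fun t : ℝ => |a * μ i| * K * t ^ (μ i - 1)) (𝓝[>] 0) atTop :=
    (tendsto_rpow_neg_nhdsGT_zero (by linarith)).const_mul_atTop (by positivity)
  obtain ⟨t, hBt, ht⟩ := ((hblow.eventually_gt_atTop B).and (Ioo_mem_nhdsGT one_pos)).exists
  linarith [hline t ht]

theorem abs_descPochhammer_eval_mul_rpow_le {s x : ℝ} {k : ℕ} (hs : s = 0 ∨ (k : ℝ) ≤ s)
    (hx : x ∈ Set.Ioo (0 : ℝ) 1) : |(descPochhammer ℝ k).eval s| * x ^ (s - k) ≤ s ^ k := by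
  rcases hs with rfl | hks
  · rcases Nat.eq_zero_or_pos k with rfl | hk
    · simp
    · simp [hk.ne']
  · have hs0 : 0 ≤ s := (Nat.cast_nonneg k).trans hks
    calc |(descPochhammer ℝ k).eval s| * x ^ (s - k)
        ≤ |(descPochhammer ℝ k).eval s| * 1 :=
          mul_le_mul_of_nonneg_left (Real.rpow_le_one hx.1.le hx.2.le (by linarith)) (abs_nonneg _)
      _ = ∏ j ∈ range k, |s - j| := by rw [mul_one, descPochhammer_eval_eq_prod_range, abs_prod]
      _ ≤ ∏ _j ∈ range k, s := by
          refine prod_le_prod (fun _ _ => abs_nonneg _) fun j hj => abs_le.2 ⟨?_, ?_⟩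
          · have : (j : ℝ) ≤ k := by exact_mod_cast (mem_range.1 hj).le
            linarith
          · linarith [(Nat.cast_nonneg j : (0 : ℝ) ≤ j)]
      _ = s ^ k := by rw [prod_const, card_range]

theorem abs_mDeriv_rpowMonomial_le {ν : Fin m → ℕ} {s : Fin m → ℝ} {R : ℝ} (c : ℝ)
    (hs : ∀ i, s i = 0 ∨ (ν i : ℝ) ≤ s i) (hR : ∀ i, s i ≤ R) {x : Fin m → ℝ}
    (hx : x ∈ Set.univ.pi fun _ => Set.Ioo (0 : ℝ) 1) :
    |mDeriv ν (rpowMonomial c s) x| ≤ |c| * R ^ ∑ i, ν i := by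
  have hx' : ∀ i, x i ∈ Set.Ioo 0 1 := Set.mem_univ_pi.1 hx
  have hs0 : ∀ i, 0 ≤ s i := fun i => (hs i).elim ge_of_eq (Nat.cast_nonneg _).trans
  rw [mDeriv_rpowMonomial ν c s (Set.pi_mono (fun _ _ => Set.Ioo_subset_Ioi_self) hx),
    rpowMonomial, abs_mul, abs_mul, mul_assoc, abs_prod, abs_prod, ← prod_mul_distrib,
    ← prod_pow_eq_pow_sum]
  refine mul_le_mul_of_nonneg_left (prod_le_prod (fun _ _ => by positivity) fun i _ => ?_)
    (abs_nonneg c)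
  rw [abs_of_pos (Real.rpow_pos_of_pos (hx' i).1 _)]
  exact (abs_descPochhammer_eval_mul_rpow_le (hs i) (hx' i)).trans
    (pow_le_pow_left₀ (hs0 i) (hR i) _)

theorem rpowMonomial_pow (c : ℝ) (μ : Fin m → ℝ) (r : ℕ) {y : Fin m → ℝ} (hy : ∀ i, 0 ≤ y i) :
    rpowMonomial c μ (fun i => y i ^ r) = rpowMonomial c (fun i => r * μ i) y := by
  refine congrArg (c * ·) (prod_congr rfl fun i _ => ?_)
  dsimp only
  rw [← Real.rpow_natCast, ← Real.rpow_mul (hy i)]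

theorem abs_mDeriv_rpowMonomial_natCast_mul_le {μ : Fin m → ℝ} {A : ℝ} {r : ℕ}
    {ν : Fin m → ℕ} (c : ℝ) (hμ : ∀ i, μ i = 0 ∨ 1 ≤ μ i) (hA : ∀ i, μ i ≤ A)
    (hν : ∑ i, ν i ≤ r) {x : Fin m → ℝ} (hx : x ∈ Set.univ.pi fun _ => Set.Ioo (0 : ℝ) 1) :
    |mDeriv ν (rpowMonomial c fun i => r * μ i) x| ≤ |c| * (A * r) ^ ∑ i, ν i := by
  refine abs_mDeriv_rpowMonomial_le c (fun i => ?_) (fun i => ?_) hx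
  · have hνi : (ν i : ℝ) ≤ r := by exact_mod_cast (single_le_sum (by simp) (mem_univ i)).trans hν
    rcases hμ i with h | h
    · simp [h]
    · right; nlinarith
  · nlinarith [hA i, (r.cast_nonneg : (0 : ℝ) ≤ r)]

end Monomials

theorem power_substitution_mild_general {m : ℕ} (a : ℝ) (μ : Fin m → ℝ) (B₁ : ℝ)
    (b : (Fin m → ℝ) → ℝ)
    (hb : ∀ x, (∀ i, x i ∈ Set.Ioo (0 : ℝ) 1) → b x = a * ∏ i, x i ^ (μ i))
    (hC1 : ∀ x, (∀ i, x i ∈ Set.Ioo (0 : ℝ) 1) → ∀ i : Fin m,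
      |mDeriv (fun j => if j = i then 1 else 0) b x| ≤ B₁) :
    ∃ A B : ℝ, 0 < A ∧ 0 < B ∧ ∀ r : ℕ, ∀ ν : Fin m → ℕ, (∑ i, ν i) ≤ r →
      ∀ x, (∀ i, x i ∈ Set.Ioo (0 : ℝ) 1) →
        |mDeriv ν (fun y => b (fun i => y i ^ r)) x| ≤
          B * (A * r) ^ (∑ i, ν i) * (Nat.factorial (∑ i, ν i) : ℝ) := by
  set U : Set (Fin m → ℝ) := Set.univ.pi fun _ => Set.Ioo 0 1
  have hU : IsOpen U := isOpen_set_pi Set.finite_univ fun _ _ => isOpen_Ioo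
  have hbU : Set.EqOn b (rpowMonomial a μ) U := fun x hx => hb x (Set.mem_univ_pi.1 hx)
  have hμ (ha : a ≠ 0) (i : Fin m) : μ i = 0 ∨ 1 ≤ μ i :=
    eq_zero_or_one_le_of_bounded_pd ha i fun y hy => by
      simpa [mDeriv_ite_eq, pd_congr hU hbU i hy] using hC1 y (Set.mem_univ_pi.1 hy) i
  obtain ⟨M, hM⟩ := Finite.exists_le μ
  set A := max M 1
  have hA (i : Fin m) : μ i ≤ A := (hM i).trans (le_max_left _ _)
  -- at `r = 0` the substituted map is the constant `b 1`, and `1` lies outside the cube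
  refine ⟨A, |a| + |b 1| + 1, lt_max_of_lt_right one_pos, by positivity, fun r ν hν x hx => ?_⟩
  rcases Nat.eq_zero_or_pos r with rfl | hr
  · obtain rfl : ν = 0 := funext fun i => sum_eq_zero_iff.1 (Nat.le_zero.1 hν) i (mem_univ i)
    simp only [mDeriv_zero, pow_zero, Pi.zero_apply, sum_const_zero, Nat.factorial_zero,
      Nat.cast_one, mul_one, ← Pi.one_def]
    linarith [abs_nonneg a]
  have hbr : Set.EqOn (fun y => b fun i => y i ^ r) (rpowMonomial a fun i => r * μ i) U :=
    fun y hy => by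
      have hy' := Set.mem_univ_pi.1 hy
      exact (hb _ fun i => ⟨pow_pos (hy' i).1 r, pow_lt_one₀ (hy' i).1.le (hy' i).2 hr.ne'⟩).trans
        (rpowMonomial_pow a μ r fun i => (hy' i).1.le)
  have hx' : x ∈ U := Set.mem_univ_pi.2 hx
  rw [mDeriv_congr hU hbr ν hx']
  calc |mDeriv ν (rpowMonomial a fun i => r * μ i) x| ≤ |a| * (A * r) ^ ∑ i, ν i := by
        rcases eq_or_ne a 0 with rfl | ha
        · simp [mDeriv_rpowMonomial ν 0 _ (Set.pi_mono (fun _ _ => Set.Ioo_subset_Ioi_self) hx'),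
            rpowMonomial]
        · exact abs_mDeriv_rpowMonomial_natCast_mul_le a (hμ ha) hA hν hx'
    _ ≤ (|a| + |b 1| + 1) * (A * r) ^ ∑ i, ν i := by gcongr; linarith [abs_nonneg (b 1)]
    _ ≤ _ := le_mul_of_one_le_right (by positivity) (by exact_mod_cast (∑ i, ν i).factorial_pos)

/-- Power substitution of a bounded monomial map with bounded `C¹`-norm is
`(Ar,B,0)`-mild up to order `r`, with `A, B` independent of `r`. -/
theorem power_substitution_mild {m : ℕ} (a : ℝ) (μ : Fin m → ℝ) (B₁ : ℝ) (hB₁ : 0 < B₁)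
    (b : (Fin m → ℝ) → ℝ)
    (hb : ∀ x, (∀ i, x i ∈ Set.Ioo (0 : ℝ) 1) → b x = a * ∏ i, x i ^ (μ i))
    (hbdd : ∀ x, (∀ i, x i ∈ Set.Ioo (0 : ℝ) 1) → |b x| ≤ B₁)
    (hC1 : ∀ x, (∀ i, x i ∈ Set.Ioo (0 : ℝ) 1) → ∀ i : Fin m,
      |mDeriv (fun j => if j = i then 1 else 0) b x| ≤ B₁) :
    ∃ A B : ℝ, 0 < A ∧ 0 < B ∧ ∀ r : ℕ, ∀ ν : Fin m → ℕ, (∑ i, ν i) ≤ r →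
      ∀ x, (∀ i, x i ∈ Set.Ioo (0 : ℝ) 1) →
        |mDeriv ν (fun y => b (fun i => y i ^ r)) x| ≤
          B * (A * r) ^ (∑ i, ν i) * (Nat.factorial (∑ i, ν i) : ℝ) :=
  power_substitution_mild_general a μ B₁ b hb hC1
end

section
/- Let κ > 0 and f(x) = exp(1 − 1/x^κ) on (0,1). Then f is (c(κ), e, 1/κ)-mild: f is C^∞ on (0,1) and for all n ∈ ℕ and x ∈ (0,1), |f^{(n)}(x)| ≤ e·c(κ)^n·(n!)^{1+1/κ}, where c(κ) = 6κ if κ ≥ 1 and c(κ) = 3(2/κ)^{1/κ} if 0 < κ ≤ 1. -/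
open Real

-- Cauchy estimate
lemma my_cauchy_est {g : ℂ → ℂ} {c : ℂ} {r M : ℝ} (hr : 0 < r) (hM0 : 0 ≤ M)
    (hd : DifferentiableOn ℂ g (Metric.closedBall c r))
    (hM : ∀ z ∈ Metric.sphere c r, ‖g z‖ ≤ M) (n : ℕ) :
    ‖iteratedDeriv n g c‖ ≤ n.factorial * M / r ^ n := by
  lift r to NNReal using hr.le with R hR
  have hR0 : 0 < R := by exact_mod_cast hr
  have h := hd.hasFPowerSeriesOnBall hR0
  have key : iteratedDeriv n g c = n.factorial • (cauchyPowerSeries g c R n fun _ => (1:ℂ)) := by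
    rw [iteratedDeriv_eq_iteratedFDeriv, ← h.factorial_smul (1:ℂ) n]
  rw [key]
  have h1 : ‖(n.factorial • (cauchyPowerSeries g c R n fun _ => (1:ℂ)) : ℂ)‖
      = n.factorial * ‖cauchyPowerSeries g c R n fun _ => (1:ℂ)‖ := by
    rw [← Nat.cast_smul_eq_nsmul ℂ, norm_smul]
    simp
  rw [h1]
  have h2 : ‖cauchyPowerSeries g c R n fun _ => (1:ℂ)‖ ≤ ‖cauchyPowerSeries g c R n‖ := by
    simpa using (cauchyPowerSeries g c R n).le_opNorm fun _ => (1:ℂ)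
  have h3 := norm_cauchyPowerSeries_le g c R n
  have hint : (∫ θ : ℝ in (0)..2 * π, ‖g (circleMap c R θ)‖) ≤ 2 * π * M := by
    have hcont : ContinuousOn (fun θ : ℝ => ‖g (circleMap c R θ)‖) (Set.Icc 0 (2*π)) := by
      apply (hd.continuousOn.comp (continuous_circleMap c R).continuousOn ?_).norm
      intro θ _
      exact Metric.sphere_subset_closedBall (circleMap_mem_sphere c (by exact_mod_cast hr.le) θ)
    calc (∫ θ : ℝ in (0)..2 * π, ‖g (circleMap c R θ)‖)
        ≤ ∫ _ : ℝ in (0)..2 * π, M := by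
          apply intervalIntegral.integral_mono_on (by positivity)
            (hcont.intervalIntegrable_of_Icc (by positivity)) intervalIntegrable_const
          intro θ hθ
          exact hM _ (circleMap_mem_sphere c (by exact_mod_cast hr.le) θ)
      _ = 2 * π * M := by simp [mul_comm]
  have h4 : ‖cauchyPowerSeries g c R n‖ ≤ M * ((R:ℝ)⁻¹) ^ n := by
    refine h3.trans ?_
    rw [abs_of_nonneg (R.coe_nonneg)]
    gcongr
    calc (2 * π)⁻¹ * ∫ θ : ℝ in (0)..2 * π, ‖g (circleMap c R θ)‖
        ≤ (2 * π)⁻¹ * (2 * π * M) := by gcongr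
      _ = M := by field_simp
  calc (n.factorial : ℝ) * ‖cauchyPowerSeries g c R n fun _ => (1:ℂ)‖
      ≤ n.factorial * (M * ((R:ℝ)⁻¹) ^ n) := by gcongr; exact h2.trans h4
    _ = n.factorial * M / (R:ℝ) ^ n := by rw [inv_pow]; ring

-- t^a e^{-bt} ≤ (a/(b e))^a
lemma my_rpow_exp_le {a b t : ℝ} (ha : 0 < a) (hb : 0 < b) (ht : 0 < t) :
    t ^ a * Real.exp (-(b * t)) ≤ (a / (b * Real.exp 1)) ^ a := by
  rw [Real.rpow_def_of_pos ht, Real.rpow_def_of_pos (by positivity), ← Real.exp_add]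
  rw [Real.exp_le_exp]
  have hlog : Real.log (t * b / a) ≤ t * b / a - 1 :=
    Real.log_le_sub_one_of_pos (by positivity)
  rw [Real.log_div (by positivity) (by positivity), Real.log_mul ht.ne' hb.ne'] at hlog
  rw [Real.log_div ha.ne' (by positivity), Real.log_mul hb.ne' (Real.exp_pos 1).ne',
    Real.log_exp]
  nlinarith [mul_le_mul_of_nonneg_left hlog ha.le, mul_div_cancel₀ (t*b) ha.ne']

-- n^n ≤ n! e^n
lemma my_pow_self_le (n : ℕ) : (n : ℝ) ^ n ≤ n.factorial * Real.exp 1 ^ n := by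
  have := Real.pow_div_factorial_le_exp (x := (n:ℝ)) (Nat.cast_nonneg n) n
  rw [div_le_iff₀ (by positivity)] at this
  calc (n:ℝ)^n ≤ Real.exp n * n.factorial := this
    _ = n.factorial * Real.exp 1 ^ n := by
        rw [← Real.rpow_natCast (Real.exp 1) n, Real.exp_one_rpow]; ring

open Real

noncomputable def gfun (κ : ℝ) : ℂ → ℂ := fun z => Complex.exp (1 - (z ^ (κ:ℂ))⁻¹)

lemma gfun_diff (κ : ℝ) : DifferentiableOn ℂ (gfun κ) {z : ℂ | 0 < z.re} := by
  intro z hz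
  have hz' : 0 < z.re := hz
  have hz0 : z ≠ 0 := by
    intro h; rw [h] at hz'; simp at hz'
  have h1 : DifferentiableAt ℂ (fun z : ℂ => z ^ (κ:ℂ)) z :=
    differentiableAt_id.cpow (differentiableAt_const _)
      (Complex.mem_slitPlane_iff.2 (Or.inl hz'))
  have h2 : z ^ (κ:ℂ) ≠ 0 := by
    rw [Complex.cpow_def_of_ne_zero hz0]; exact Complex.exp_ne_zero _
  exact (((h1.inv h2).const_sub 1).cexp).differentiableWithinAt

lemma gfun_an (κ : ℝ) (n : ℕ) :
    AnalyticOnNhd ℂ (iteratedDeriv n (gfun κ)) {z : ℂ | 0 < z.re} := by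
  induction n with
  | zero =>
    simpa using (gfun_diff κ).analyticOnNhd (isOpen_lt continuous_const Complex.continuous_re)
  | succ n ih => rw [iteratedDeriv_succ]; exact ih.deriv

lemma key_re (κ : ℝ) (n : ℕ) : ∀ x : ℝ, 0 < x →
    iteratedDeriv n (fun y : ℝ => Real.exp (1 - 1 / y ^ κ)) x
      = (iteratedDeriv n (gfun κ) x).re := by
  induction n with
  | zero =>
    intro x hx
    simp only [iteratedDeriv_zero, gfun]
    rw [← Complex.ofReal_cpow hx.le]
    have h : (1 - ((((x:ℝ) ^ κ : ℝ)) : ℂ)⁻¹) = ((1 - 1 / (x:ℝ) ^ κ : ℝ) : ℂ) := by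
      push_cast; ring
    rw [h, ← Complex.ofReal_exp, Complex.ofReal_re]
  | succ n ih =>
    intro x hx
    rw [iteratedDeriv_succ]
    have hEq : iteratedDeriv n (fun y : ℝ => Real.exp (1 - 1 / y ^ κ))
        =ᶠ[nhds x] fun y : ℝ => (iteratedDeriv n (gfun κ) y).re :=
      Filter.eventually_of_mem (Ioi_mem_nhds hx) (fun y hy => ih y hy)
    rw [hEq.deriv_eq]
    have hx' : (x:ℂ) ∈ {z : ℂ | 0 < z.re} := by simpa using hx
    have hd : HasDerivAt (iteratedDeriv n (gfun κ)) (iteratedDeriv (n+1) (gfun κ) x) x := by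
      have h := ((gfun_an κ n) _ hx').differentiableAt.hasDerivAt
      rwa [← iteratedDeriv_succ] at h
    exact hd.real_of_complex.deriv




lemma abs_arcsin_le {u : ℝ} (hu : |u| ≤ 1) : |Real.arcsin u| ≤ π / 2 * |u| := by
  have habs : |Real.arcsin u| = Real.arcsin |u| := by
    rcases abs_cases u with ⟨h1, h2⟩ | ⟨h1, h2⟩
    · rw [h1, abs_of_nonneg (Real.arcsin_nonneg.2 h2)]
    · rw [h1, abs_of_nonpos (Real.arcsin_nonpos.2 h2.le), ← Real.arcsin_neg]
  rw [habs]
  have h0 : (0:ℝ) ≤ |u| := abs_nonneg u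
  have hs : Real.sin (Real.arcsin |u|) = |u| := Real.sin_arcsin (by linarith) hu
  have h2 := Real.mul_le_sin (Real.arcsin_nonneg.2 h0) (Real.arcsin_le_pi_div_two _)
  rw [hs] at h2
  have h3 := mul_le_mul_of_nonneg_left h2 (by positivity : (0:ℝ) ≤ π/2)
  have h4 : π/2 * (2/π * Real.arcsin |u|) = Real.arcsin |u| := by
    field_simp
  linarith

lemma sphere_bound {κ δ x : ℝ} (hκ : 0 < κ) (hx : 0 < x) (hx1 : x < 1)
    (hδ0 : 0 < δ) (hδ3 : δ ≤ 1/3) (hκδ : κ * δ ≤ 1/3)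
    (hB : (1:ℝ)/2 ≤ (1+δ) ^ (-κ) * (Real.sqrt 2 / 2)) :
    ∀ z ∈ Metric.sphere (x:ℂ) (δ*x), ‖gfun κ z‖ ≤ Real.exp (1 - x ^ (-κ) / 2) := by
  intro z hz
  rw [Metric.mem_sphere, Complex.dist_eq] at hz
  have hre : (1-δ)*x ≤ z.re := by
    have h1 : |(z - (x:ℂ)).re| ≤ δ * x := hz ▸ Complex.abs_re_le_norm _
    have h2 : (z - (x:ℂ)).re = z.re - x := by simp [Complex.sub_re]
    rw [h2] at h1
    have := abs_le.1 h1
    linarith [this.1]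
  have hrepos : 0 < z.re := lt_of_lt_of_le (by nlinarith) hre
  have hz0 : z ≠ 0 := fun h => by rw [h] at hrepos; simp at hrepos
  have him : |z.im| ≤ δ * x := by
    have h1 : |(z - (x:ℂ)).im| ≤ δ * x := hz ▸ Complex.abs_im_le_norm _
    simpa [Complex.sub_im] using h1
  have habs_pos : 0 < ‖z‖ := norm_pos_iff.mpr hz0
  have habs_ge : (1-δ)*x ≤ ‖z‖ := hre.trans (Complex.re_le_norm z)
  have habs_le : ‖z‖ ≤ (1+δ)*x := by
    calc ‖z‖ = ‖(x:ℂ) + (z - x)‖ := by ring_nf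
      _ ≤ ‖(x:ℂ)‖ + ‖z - x‖ := norm_add_le _ _
      _ = x + δ * x := by rw [hz, Complex.norm_real, Real.norm_eq_abs, abs_of_pos hx]
      _ = (1+δ)*x := by ring
  -- the real part estimate
  have harg : |Complex.arg z| ≤ π/2 * (δ/(1-δ)) := by
    rw [Complex.arg_of_re_nonneg hrepos.le]
    have hu : |z.im / ‖z‖| ≤ δ/(1-δ) := by
      rw [abs_div, abs_of_pos habs_pos]
      apply div_le_div₀ (by positivity) him (by nlinarith) habs_ge |>.trans
      rw [div_le_div_iff₀ (by nlinarith) (by linarith)]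
      ring_nf; nlinarith
    have hd1 : δ/(1-δ) ≤ 1 := by
      rw [div_le_one (by linarith)]; linarith
    exact (abs_arcsin_le (hu.trans hd1)).trans
      (mul_le_mul_of_nonneg_left hu (by positivity))
  have hcos : Real.sqrt 2 / 2 ≤ Real.cos (κ * Complex.arg z) := by
    have h1 : |κ * Complex.arg z| ≤ π/4 := by
      rw [abs_mul, abs_of_pos hκ]
      calc κ * |Complex.arg z| ≤ κ * (π/2 * (δ/(1-δ))) := by
            apply mul_le_mul_of_nonneg_left harg hκ.le
        _ = π/2 * (κ*δ/(1-δ)) := by ring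
        _ ≤ π/2 * (1/2) := by
            apply mul_le_mul_of_nonneg_left _ (by positivity)
            rw [div_le_div_iff₀ (by linarith) (by norm_num)]
            nlinarith
        _ = π/4 := by ring
    calc Real.sqrt 2 / 2 = Real.cos (π/4) := Real.cos_pi_div_four.symm
      _ ≤ Real.cos |κ * Complex.arg z| := by
          apply Real.cos_le_cos_of_nonneg_of_le_pi (abs_nonneg _) (by linarith [Real.pi_pos]) h1
      _ = Real.cos (κ * Complex.arg z) := Real.cos_abs _
  have hRe : x ^ (-κ) / 2 ≤ ((z ^ (κ:ℂ))⁻¹).re := by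
    have e1 : (z ^ (κ:ℂ))⁻¹ = z ^ (((-κ:ℝ)):ℂ) := by
      push_cast
      rw [Complex.cpow_neg]
    have e2 : (z ^ (((-κ:ℝ)):ℂ)).re
        = Real.exp (-κ * Real.log ‖z‖) * Real.cos (κ * Complex.arg z) := by
      rw [Complex.cpow_def_of_ne_zero hz0, Complex.exp_re]
      have hre' : (Complex.log z * (((-κ:ℝ)):ℂ)).re = -κ * Real.log ‖z‖ := by
        simp [Complex.mul_re, Complex.log_re, Complex.log_im]; ring
      have him' : (Complex.log z * (((-κ:ℝ)):ℂ)).im = -(κ * Complex.arg z) := by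
        simp [Complex.mul_im, Complex.log_im]; ring
      rw [hre', him', Real.cos_neg]
    have e3 : Real.exp (-κ * Real.log ‖z‖) = ‖z‖ ^ (-κ) := by
      rw [Real.rpow_def_of_pos habs_pos, mul_comm]
    have h4 : ((1+δ)*x) ^ (-κ) ≤ ‖z‖ ^ (-κ) :=
      Real.rpow_le_rpow_of_nonpos (by positivity) habs_le (by linarith)
    have h5 : ((1+δ)*x) ^ (-κ) = (1+δ) ^ (-κ) * x ^ (-κ) :=
      Real.mul_rpow (by positivity) hx.le
    rw [e1, e2, e3]
    calc x ^ (-κ) / 2 = x ^ (-κ) * (1/2) := by ring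
      _ ≤ x ^ (-κ) * ((1+δ) ^ (-κ) * (Real.sqrt 2 / 2)) := by
          apply mul_le_mul_of_nonneg_left hB (Real.rpow_nonneg hx.le _)
      _ = ((1+δ) ^ (-κ) * x ^ (-κ)) * (Real.sqrt 2 / 2) := by ring
      _ ≤ ‖z‖ ^ (-κ) * Real.cos (κ * Complex.arg z) := by
          apply mul_le_mul (h5 ▸ h4) hcos (by positivity) (Real.rpow_nonneg habs_pos.le _)
  show ‖Complex.exp _‖ ≤ _
  rw [Complex.norm_exp]
  apply Real.exp_le_exp.2
  have : (1 - (z ^ (κ:ℂ))⁻¹).re = 1 - ((z ^ (κ:ℂ))⁻¹).re := by simp [Complex.sub_re]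
  rw [this]
  linarith

open Real

lemma hB_small {κ : ℝ} (hκ : 0 < κ) (hκ1 : κ ≤ 1) :
    (1:ℝ)/2 ≤ (1 + 1/3 : ℝ) ^ (-κ) * (Real.sqrt 2 / 2) := by
  have h1 : ((1:ℝ) + 1/3) ^ κ ≤ (1 + 1/3 : ℝ) ^ (1:ℝ) :=
    Real.rpow_le_rpow_of_exponent_le (by norm_num) hκ1
  rw [Real.rpow_one] at h1
  have h2 : (3/4 : ℝ) ≤ (1 + 1/3 : ℝ) ^ (-κ) := by
    rw [Real.rpow_neg (by norm_num)]
    rw [le_inv_comm₀ (by norm_num) (Real.rpow_pos_of_pos (by norm_num) κ)]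
    exact h1.trans (by norm_num)
  have hs : Real.sqrt 2 ^ 2 = 2 := Real.sq_sqrt (by norm_num)
  have hs0 : 0 ≤ Real.sqrt 2 := Real.sqrt_nonneg 2
  nlinarith [mul_le_mul_of_nonneg_right h2 (by positivity : (0:ℝ) ≤ Real.sqrt 2 / 2)]

lemma hB_big {κ : ℝ} (hκ1 : 1 ≤ κ) :
    (1:ℝ)/2 ≤ (1 + 1/(3*κ) : ℝ) ^ (-κ) * (Real.sqrt 2 / 2) := by
  have hκ : 0 < κ := lt_of_lt_of_le one_pos hκ1
  have h1 : ((1:ℝ) + 1/(3*κ)) ^ κ ≤ Real.exp (1/3) := by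
    have ha : (1:ℝ) + 1/(3*κ) ≤ Real.exp (1/(3*κ)) := by
      have := Real.add_one_le_exp (1/(3*κ)); linarith
    calc ((1:ℝ) + 1/(3*κ)) ^ κ ≤ Real.exp (1/(3*κ)) ^ κ :=
          Real.rpow_le_rpow (by positivity) ha hκ.le
      _ = Real.exp (1/(3*κ) * κ) := (Real.exp_mul _ _).symm
      _ = Real.exp (1/3) := by
            congr 1
            field_simp
  have h3 : Real.exp (1/3) ≤ Real.sqrt 2 := by
    rw [← Real.exp_log (Real.sqrt_pos.2 two_pos), Real.exp_le_exp, Real.log_sqrt (by norm_num)]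
    linarith [Real.log_two_gt_d9]
  have h2 : (Real.sqrt 2)⁻¹ ≤ (1 + 1/(3*κ) : ℝ) ^ (-κ) := by
    rw [Real.rpow_neg (by positivity)]
    apply inv_anti₀ (Real.rpow_pos_of_pos (by positivity) κ)
    exact h1.trans h3
  have hs : Real.sqrt 2 ^ 2 = 2 := Real.sq_sqrt (by norm_num)
  have hs0 : 0 < Real.sqrt 2 := Real.sqrt_pos.2 two_pos
  have key : (Real.sqrt 2)⁻¹ * (Real.sqrt 2 / 2) = 1/2 := by
    rw [eq_div_iff (by norm_num : (2:ℝ) ≠ 0)]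
    field_simp
  calc (1:ℝ)/2 = (Real.sqrt 2)⁻¹ * (Real.sqrt 2 / 2) := key.symm
    _ ≤ (1 + 1/(3*κ) : ℝ) ^ (-κ) * (Real.sqrt 2 / 2) := by
        apply mul_le_mul_of_nonneg_right h2 (by positivity)

open Real in
theorem exp_one_sub_inv_rpow_mild (κ : ℝ) (hκ : 0 < κ)
    (c : ℝ) (hc : c = if 1 ≤ κ then 6 * κ else 3 * (2 / κ) ^ (1 / κ)) :
    ContDiffOn ℝ (⊤ : ℕ∞) (fun x : ℝ => Real.exp (1 - 1 / x ^ κ)) (Set.Ioo 0 1) ∧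
      ∀ n : ℕ, ∀ x ∈ Set.Ioo (0 : ℝ) 1,
        |iteratedDeriv n (fun y : ℝ => Real.exp (1 - 1 / y ^ κ)) x| ≤
          Real.exp 1 * c ^ n * (Nat.factorial n : ℝ) ^ (1 + 1 / κ) := by
  constructor
  · intro x hx
    have hx0 : x ≠ 0 := ne_of_gt hx.1
    have h1 : ContDiffAt ℝ (⊤ : ℕ∞) (fun y : ℝ => y ^ κ) x := Real.contDiffAt_rpow_const_of_ne hx0
    have hxκ : x ^ κ ≠ 0 := (Real.rpow_pos_of_pos hx.1 κ).ne'
    have h2 : ContDiffAt ℝ (⊤ : ℕ∞) (fun y : ℝ => 1 - 1/y^κ) x := by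
      have h3 := ContDiffAt.sub (contDiffAt_const (c := (1:ℝ))) (h1.inv hxκ)
      simpa [one_div] using h3
    exact (Real.contDiff_exp.contDiffAt.comp x h2).contDiffWithinAt
  · intro n x hx
    obtain ⟨hx0, hx1⟩ := hx
    have hxκpos : 0 < x ^ κ := Real.rpow_pos_of_pos hx0 κ
    rcases Nat.eq_zero_or_pos n with rfl | hn
    · simp only [iteratedDeriv_zero, pow_zero, Nat.factorial_zero, Nat.cast_one,
        Real.one_rpow, mul_one]
      rw [abs_of_pos (Real.exp_pos _)]
      apply Real.exp_le_exp.2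
      have h4 : 0 < 1 / x ^ κ := by positivity
      linarith
    -- setup
    set δ : ℝ := if 1 ≤ κ then 1/(3*κ) else 1/3 with hδdef
    have hδ0 : 0 < δ := by rw [hδdef]; split <;> positivity
    have hδ3 : δ ≤ 1/3 := by
      rw [hδdef]; split
      · rename_i h
        rw [div_le_div_iff₀ (by positivity) (by norm_num)]
        nlinarith
      · exact le_rfl
    have hκδ : κ * δ ≤ 1/3 := by
      rw [hδdef]; split
      · rename_i h
        rw [mul_one_div]
        rw [div_le_div_iff₀ (by positivity) (by norm_num)]
        ring_nf
        nlinarith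
      · rename_i h
        push_neg at h
        rw [mul_one_div]
        rw [div_le_div_iff₀ (by norm_num) (by norm_num)]
        nlinarith
    have hB : (1:ℝ)/2 ≤ (1+δ) ^ (-κ) * (Real.sqrt 2 / 2) := by
      rw [hδdef]; split
      · rename_i h; exact hB_big h
      · rename_i h; push_neg at h; exact hB_small hκ h.le
    -- Cauchy estimate
    have hsub : Metric.closedBall (x:ℂ) (δ*x) ⊆ {z : ℂ | 0 < z.re} := by
      intro z hz
      rw [Metric.mem_closedBall, Complex.dist_eq] at hz
      have h1 : |(z - (x:ℂ)).re| ≤ δ * x := (Complex.abs_re_le_norm _).trans hz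
      have h2 : (z - (x:ℂ)).re = z.re - x := by simp [Complex.sub_re]
      rw [h2] at h1
      have h3 := (abs_le.1 h1).1
      show 0 < z.re
      nlinarith
    have hcau := my_cauchy_est (g := gfun κ) (c := (x:ℂ)) (r := δ*x)
      (M := Real.exp (1 - x ^ (-κ) / 2)) (by positivity) (Real.exp_pos _).le
      ((gfun_diff κ).mono hsub)
      (sphere_bound hκ hx0 hx1 hδ0 hδ3 hκδ hB) n
    rw [key_re κ n x hx0]
    have habs : |(iteratedDeriv n (gfun κ) x).re| ≤ ‖iteratedDeriv n (gfun κ) x‖ :=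
      Complex.abs_re_le_norm _
    -- arithmetic
    have ht0 : (0:ℝ) < x ^ (-κ) := Real.rpow_pos_of_pos hx0 _
    set t : ℝ := x ^ (-κ) with htdef
    have hNκ : (0:ℝ) < (n:ℝ)/κ := by
      have : (0:ℝ) < (n:ℝ) := by exact_mod_cast hn
      positivity
    have hxt : (x⁻¹) ^ n = t ^ ((n:ℝ)/κ) := by
      rw [htdef, ← Real.rpow_natCast x⁻¹ n, ← Real.rpow_neg_one x, ← Real.rpow_mul hx0.le,
        ← Real.rpow_mul hx0.le]
      congr 1
      field_simp
    have hstep3 : t ^ ((n:ℝ)/κ) * Real.exp (-(1/2 * t))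
        ≤ (2*(n:ℝ)/(κ * Real.exp 1)) ^ ((n:ℝ)/κ) := by
      have heq : (2*(n:ℝ)/(κ * Real.exp 1)) = ((n:ℝ)/κ)/((1/2) * Real.exp 1) := by
        field_simp
      rw [heq]
      exact my_rpow_exp_le hNκ (by norm_num : (0:ℝ) < 1/2) ht0
    have hstep4 : (2*(n:ℝ)/(κ * Real.exp 1)) ^ ((n:ℝ)/κ)
        ≤ ((2/κ) ^ ((1:ℝ)/κ)) ^ n * ((Nat.factorial n : ℝ)) ^ ((1:ℝ)/κ) := by
      set A : ℝ := 2*(n:ℝ)/(κ * Real.exp 1) with hA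
      have hA0 : 0 ≤ A := by positivity
      have h1 : A ^ ((n:ℝ)/κ) = (A ^ n) ^ ((1:ℝ)/κ) := by
        rw [← Real.rpow_natCast A n, ← Real.rpow_mul hA0]
        congr 1
        field_simp
      have h2 : A ^ n ≤ (2/κ) ^ n * (Nat.factorial n : ℝ) := by
        have hAn : A ^ n = (2/(κ * Real.exp 1)) ^ n * (n:ℝ) ^ n := by
          rw [hA, ← mul_pow]
          congr 1
          ring
        rw [hAn]
        have hee : (2/(κ * Real.exp 1)) * Real.exp 1 = 2/κ := by
          field_simp
        calc (2/(κ * Real.exp 1)) ^ n * (n:ℝ) ^ n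
            ≤ (2/(κ * Real.exp 1)) ^ n * ((Nat.factorial n : ℝ) * Real.exp 1 ^ n) :=
              mul_le_mul_of_nonneg_left (my_pow_self_le n) (by positivity)
          _ = ((2/(κ * Real.exp 1)) * Real.exp 1) ^ n * (Nat.factorial n : ℝ) := by
              rw [mul_pow]; ring
          _ = (2/κ) ^ n * (Nat.factorial n : ℝ) := by rw [hee]
      have h3 : (A ^ n) ^ ((1:ℝ)/κ) ≤ ((2/κ) ^ n * (Nat.factorial n : ℝ)) ^ ((1:ℝ)/κ) :=
        Real.rpow_le_rpow (by positivity) h2 (by positivity)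
      have h4 : ((2/κ) ^ n * (Nat.factorial n : ℝ)) ^ ((1:ℝ)/κ)
          = ((2/κ) ^ n) ^ ((1:ℝ)/κ) * ((Nat.factorial n : ℝ)) ^ ((1:ℝ)/κ) :=
        Real.mul_rpow (by positivity) (by positivity)
      have h5 : ((2/κ) ^ n) ^ ((1:ℝ)/κ) = ((2/κ) ^ ((1:ℝ)/κ)) ^ n := by
        rw [← Real.rpow_natCast (2/κ) n, ← Real.rpow_mul (by positivity),
          mul_comm, Real.rpow_mul (by positivity), Real.rpow_natCast]
      rw [h1, ← h5, ← h4]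
      exact h3
    have hδc : δ⁻¹ * (2/κ) ^ ((1:ℝ)/κ) ≤ c := by
      rw [hc, hδdef]; split
      · rename_i h
        have h2κ : (2/κ) ^ ((1:ℝ)/κ) ≤ 2 := by
          rcases le_total κ 2 with h2 | h2
          · have hb : (1:ℝ) ≤ 2/κ := by rw [le_div_iff₀ hκ]; linarith
            calc (2/κ) ^ ((1:ℝ)/κ) ≤ (2/κ) ^ (1:ℝ) :=
                  Real.rpow_le_rpow_of_exponent_le hb (by rw [div_le_one hκ]; exact h)
              _ = 2/κ := Real.rpow_one _
              _ ≤ 2 := by rw [div_le_iff₀ hκ]; nlinarith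
          · have hb : 2/κ ≤ 1 := by rw [div_le_one hκ]; exact h2
            calc (2/κ) ^ ((1:ℝ)/κ) ≤ 1 := Real.rpow_le_one (by positivity) hb (by positivity)
              _ ≤ 2 := one_le_two
        have hδinv : ((1:ℝ)/(3*κ))⁻¹ = 3*κ := by
          rw [one_div, inv_inv]
        rw [hδinv]
        calc 3*κ * (2/κ) ^ ((1:ℝ)/κ) ≤ 3*κ*2 :=
              mul_le_mul_of_nonneg_left h2κ (by positivity)
          _ = 6*κ := by ring
      · have h6 : ((1:ℝ)/3)⁻¹ = 3 := by norm_num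
        rw [h6]
    have hfacpos : (0:ℝ) < (Nat.factorial n : ℝ) := by exact_mod_cast n.factorial_pos
    have hpowfac : ((Nat.factorial n : ℝ)) ^ (1 + 1/κ)
        = (Nat.factorial n : ℝ) * (Nat.factorial n : ℝ) ^ ((1:ℝ)/κ) := by
      rw [Real.rpow_add hfacpos, Real.rpow_one]
    calc |(iteratedDeriv n (gfun κ) x).re|
        ≤ (n.factorial : ℝ) * Real.exp (1 - t/2) / (δ*x) ^ n := habs.trans hcau
      _ = Real.exp 1 * ((n.factorial : ℝ) * (δ⁻¹) ^ n * ((x⁻¹) ^ n * Real.exp (-(1/2*t)))) := by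
          rw [show (1 - t/2) = 1 + (-(1/2*t)) by ring, Real.exp_add, mul_pow, div_eq_mul_inv,
            mul_inv, ← inv_pow, ← inv_pow]
          ring
      _ ≤ Real.exp 1 * ((n.factorial : ℝ) * (δ⁻¹) ^ n
            * (((2/κ) ^ ((1:ℝ)/κ)) ^ n * ((Nat.factorial n : ℝ)) ^ ((1:ℝ)/κ))) := by
          apply mul_le_mul_of_nonneg_left _ (Real.exp_pos 1).le
          apply mul_le_mul_of_nonneg_left _ (by positivity)
          rw [hxt]
          exact hstep3.trans hstep4
      _ = Real.exp 1 * (δ⁻¹ * (2/κ) ^ ((1:ℝ)/κ)) ^ n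
            * ((Nat.factorial n : ℝ) * (Nat.factorial n : ℝ) ^ ((1:ℝ)/κ)) := by
          rw [mul_pow]; ring
      _ ≤ Real.exp 1 * c ^ n * (Nat.factorial n : ℝ) ^ (1 + 1/κ) := by
          rw [hpowfac]
          apply mul_le_mul_of_nonneg_right _ (by positivity)
          exact mul_le_mul_of_nonneg_left (pow_le_pow_left₀ (by positivity) hδc n)
            (Real.exp_pos 1).le
end
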